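/- For all integers a, b ≥ 2 and r ≥ 0, the network consisting of a complete bipartite graph K_{a,b} together with r isolated vertices is an APSN for the betweenness centrality game. In particular, a 4-cycle together with any number of isolated vertices is an APSN, and there exist APSN for the betweenness centrality game whose connected component with at least two vertices is not a complete graph. -/

import Mathlib

open SimpleGraph

/-- Degree of vertex `i` in network `g`. -/
noncomputable def deg {V : Type*} (g : SimpleGraph V) (i : V) : ℕ :=
  Nat.card (g.neighborSet i)

/-- The network `g` with the (missing) edge `ij` added. -/
def addE {V : Type*} (g : SimpleGraph V) (i j : V) : SimpleGraph V :=
  g ⊔ SimpleGraph.fromEdgeSet {s(i, j)}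

/-- The network `g` with the edge `ij` removed. -/
def delE {V : Type*} (g : SimpleGraph V) (i j : V) : SimpleGraph V :=
  g.deleteEdges {s(i, j)}

/-- Utility of agent `i` in the game with centralities `C` and edge cost `c`. -/
noncomputable def util {V : Type*} (C : V → SimpleGraph V → ℝ) (c : ℝ) (i : V)
    (g : SimpleGraph V) : ℝ :=
  C i g - c * (deg g i)

/-- Adding the missing edge `ij` is an improving move. -/
def ImprovingAdd {V : Type*} (C : V → SimpleGraph V → ℝ) (c : ℝ) (g : SimpleGraph V)
    (i j : V) : Prop :=
  util C c i (addE g i j) ≥ util C c i g ∧ util C c j (addE g i j) ≥ util C c j g ∧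
    (util C c i (addE g i j) > util C c i g ∨ util C c j (addE g i j) > util C c j g)

/-- Deleting the edge `ij` is an improving move. -/
def ImprovingDel {V : Type*} (C : V → SimpleGraph V → ℝ) (c : ℝ) (g : SimpleGraph V)
    (i j : V) : Prop :=
  util C c i (delE g i j) > util C c i g ∨ util C c j (delE g i j) > util C c j g

/-- `g` is pairwise stable at edge cost `c`. -/
def PairwiseStable {V : Type*} (C : V → SimpleGraph V → ℝ) (c : ℝ) (g : SimpleGraph V) : Prop :=
  (∀ i j : V, i ≠ j → ¬ g.Adj i j → ¬ ImprovingAdd C c g i j) ∧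
  (∀ i j : V, g.Adj i j → ¬ ImprovingDel C c g i j)

/-- `g` is asymptotically pairwise stable. -/
def APSN {V : Type*} (C : V → SimpleGraph V → ℝ) (g : SimpleGraph V) : Prop :=
  ∃ ε₀ : ℝ, 0 < ε₀ ∧ ∀ c : ℝ, 0 < c → c < ε₀ → PairwiseStable C c g

/-- Axiom 1: the centrality of agent `i` is increasing. -/
def Axiom1 {V : Type*} (C : V → SimpleGraph V → ℝ) (i : V) : Prop :=
  ∀ (g : SimpleGraph V) (j : V), j ≠ i → ¬ g.Adj i j → C i (addE g i j) > C i g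

/-- Axiom 1′: the centrality of agent `i` is decreasing. -/
def Axiom1' {V : Type*} (C : V → SimpleGraph V → ℝ) (i : V) : Prop :=
  ∀ (g : SimpleGraph V) (j : V), j ≠ i → ¬ g.Adj i j → C i (addE g i j) < C i g

/-- Axiom 2: the centrality of agent `i` is componentwise. -/
def Axiom2 {V : Type*} (C : V → SimpleGraph V → ℝ) (i : V) : Prop :=
  ∀ (g : SimpleGraph V) (j : V), j ≠ i → ¬ g.Adj i j →
    ((g.Reachable i j → C i (addE g i j) > C i g) ∧
     (¬ g.Reachable i j → C i (addE g i j) ≤ C i g))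

/-- Axiom 2′: the centrality of agent `i` is peripheral. -/
def Axiom2' {V : Type*} (C : V → SimpleGraph V → ℝ) (i : V) : Prop :=
  ∀ (g : SimpleGraph V) (j : V), j ≠ i → ¬ g.Adj i j →
    ((g.Reachable i j → C i (addE g i j) ≤ C i g) ∧
     (¬ g.Reachable i j → C i (addE g i j) > C i g))

/-- The centrality of agent `i` is degree homophilic with (strictly increasing) `f`. -/
def DegreeHomophilic {V : Type*} (C : V → SimpleGraph V → ℝ) (i : V) (f : ℕ → ℤ) : Prop :=
  ∀ (g : SimpleGraph V) (j : V), j ≠ i → ¬ g.Adj i j →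
    (C i (addE g i j) > C i g ↔ (deg g j : ℤ) ≤ f (deg g i))

/-- The number of shortest paths between `y` and `z` in `g`
(`0` if `y` and `z` are in different components). -/
noncomputable def sigmaAll {V : Type*} (g : SimpleGraph V) (y z : V) : ℕ :=
  Nat.card {p : g.Path y z // p.1.length = g.dist y z}

/-- The number of shortest paths between `y` and `z` in `g` passing through `i`. -/
noncomputable def sigmaThr {V : Type*} (g : SimpleGraph V) (y z i : V) : ℕ :=
  Nat.card {p : g.Path y z // p.1.length = g.dist y z ∧ i ∈ p.1.support}

open scoped Classical in
/-- Betweenness centrality of `i` in `g`: the sum over unordered pairs `{y,z} ⊆ V∖{i}`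
of `σ_yz(i)/σ_yz(g)` (summands with `σ_yz(g) = 0` vanish, since `x/0 = 0` in `ℝ`). -/
noncomputable def btw {V : Type*} [Fintype V] (g : SimpleGraph V) (i : V) : ℝ :=
  (1 / 2) * ∑ y : V, ∑ z : V,
    if y ≠ z ∧ y ≠ i ∧ z ≠ i then (sigmaThr g y z i : ℝ) / (sigmaAll g y z : ℝ) else 0

/-! In `K_{A,B}` plus isolated vertices, any two vertices in the same component other than a
given agent `i` (also after adding an edge inside a side, or deleting an edge at `i`) are at
distance at most two. Then the pair `{y, z}` contributes `1 / |N(y) ∩ N(z)|` to the betweenness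
of `i` when `y, z` are non-adjacent neighbours of `i`, and nothing otherwise, so the contribution
only depends on the neighbourhoods of `y` and `z`.

Adding an edge `ij` inside a side leaves the betweenness of `i` unchanged, since `i` and `j` have
the same neighbourhood; linking an isolated vertex gives it a single neighbour and so betweenness
zero. Either way one endpoint pays the cost for nothing. Deleting an edge `ij` strictly lowers the
betweenness of `i`, which stops mediating between `j` and the rest of `j`'s side; as there are
finitely many edges, these losses all exceed any small enough cost. -/

section EdgeModification

variable {V : Type*} {g : SimpleGraph V} {i j u v : V}

lemma addE_adj : (addE g i j).Adj u v ↔ g.Adj u v ∨ u ≠ v ∧ (u = i ∧ v = j ∨ u = j ∧ v = i) := by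
  simp [addE, and_comm]

lemma delE_adj : (delE g i j).Adj u v ↔ g.Adj u v ∧ ¬(u = i ∧ v = j ∨ u = j ∧ v = i) := by
  simp [delE]

lemma addE_comm : addE g i j = addE g j i := by
  ext u v; simp only [addE_adj]; tauto

lemma delE_comm : delE g i j = delE g j i := by
  ext u v; simp only [delE_adj]; tauto

lemma le_addE : g ≤ addE g i j := le_sup_left

lemma delE_le : delE g i j ≤ g := deleteEdges_le _

lemma neighborSet_addE_of_ne (hi : v ≠ i) (hj : v ≠ j) :
    (addE g i j).neighborSet v = g.neighborSet v := by
  ext w; simp [addE_adj, hi, hj]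

lemma neighborSet_delE_of_ne (hi : v ≠ i) (hj : v ≠ j) :
    (delE g i j).neighborSet v = g.neighborSet v := by
  ext w; simp [delE_adj, hi, hj]

lemma neighborSet_addE_self (hij : i ≠ j) :
    (addE g i j).neighborSet i = insert j (g.neighborSet i) := by
  ext w; simp only [mem_neighborSet, addE_adj, Set.mem_insert_iff]; grind

lemma neighborSet_delE_self (hij : i ≠ j) :
    (delE g i j).neighborSet i = g.neighborSet i \ {j} := by
  ext w; simp only [mem_neighborSet, delE_adj, Set.mem_sdiff, Set.mem_singleton_iff]; grind

variable [Finite V]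

lemma deg_addE (hij : i ≠ j) (hnadj : ¬ g.Adj i j) : deg (addE g i j) i = deg g i + 1 := by
  rw [deg, deg, neighborSet_addE_self hij, Nat.card_coe_set_eq, Nat.card_coe_set_eq,
    Set.ncard_insert_of_notMem (show j ∉ g.neighborSet i from hnadj)]

lemma deg_delE_add_one (hadj : g.Adj i j) : deg (delE g i j) i + 1 = deg g i := by
  rw [deg, deg, neighborSet_delE_self hadj.ne, Nat.card_coe_set_eq, Nat.card_coe_set_eq,
    Set.ncard_sdiff_singleton_add_one (show j ∈ g.neighborSet i from hadj)]

end EdgeModification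

section Stability

open Filter Topology

variable {V : Type*} [Finite V] {C : V → SimpleGraph V → ℝ} {g : SimpleGraph V} {c : ℝ} {i j : V}

lemma util_addE_lt (hc : 0 < c) (hij : i ≠ j) (hnadj : ¬ g.Adj i j)
    (hC : C i (addE g i j) ≤ C i g) : util C c i (addE g i j) < util C c i g := by
  simp only [util, deg_addE hij hnadj]
  push_cast
  linarith

lemma util_delE_lt (hadj : g.Adj i j) (hC : c < C i g - C i (delE g i j)) :
    util C c i (delE g i j) < util C c i g := by
  simp only [util, ← deg_delE_add_one hadj]
  push_cast
  linarith

lemma pairwiseStable_of_forall (hc : 0 < c)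
    (hadd : ∀ i j, i ≠ j → ¬ g.Adj i j → C i (addE g i j) ≤ C i g ∨ C j (addE g i j) ≤ C j g)
    (hdel : ∀ i j, g.Adj i j → c < C i g - C i (delE g i j)) : PairwiseStable C c g := by
  refine ⟨fun i j hij hnadj ⟨hi, hj, _⟩ => ?_, fun i j hadj hgain => ?_⟩
  · rcases hadd i j hij hnadj with h | h
    · exact (util_addE_lt hc hij hnadj h).not_ge hi
    · rw [addE_comm] at hj h
      exact (util_addE_lt hc hij.symm (fun h' => hnadj h'.symm) h).not_ge hj
  · rcases hgain with h | h
    · exact (util_delE_lt hadj (hdel i j hadj)).not_gt h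
    · rw [delE_comm] at h
      exact (util_delE_lt hadj.symm (hdel j i hadj.symm)).not_gt h

theorem apsn_of_forall
    (hadd : ∀ i j, i ≠ j → ¬ g.Adj i j → C i (addE g i j) ≤ C i g ∨ C j (addE g i j) ≤ C j g)
    (hdel : ∀ i j, g.Adj i j → C i (delE g i j) < C i g) : APSN C g := by
  have hsmall : ∀ᶠ c in 𝓝[>] (0 : ℝ),
      ∀ p : V × V, g.Adj p.1 p.2 → c < C p.1 g - C p.1 (delE g p.1 p.2) := by
    refine eventually_all.2 fun p => ?_
    by_cases hp : g.Adj p.1 p.2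
    · exact (eventually_nhdsWithin_of_eventually_nhds
        (eventually_lt_nhds (sub_pos.2 (hdel _ _ hp)))).mono fun _ h _ => h
    · exact .of_forall fun _ h => absurd h hp
  obtain ⟨ε₀, hε₀, hε⟩ := (nhdsGT_basis (0 : ℝ)).eventually_iff.1 hsmall
  exact ⟨ε₀, hε₀, fun c hc hcε =>
    pairwiseStable_of_forall hc hadd fun i j hadj => hε ⟨hc, hcε⟩ (i, j) hadj⟩

end Stability

section PathCounts

variable {V : Type*} {h : SimpleGraph V} {y z i : V}

lemma SimpleGraph.Walk.support_of_length_eq_two (w : h.Walk y z) (hw : w.length = 2) :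
    w.support = [y, w.snd, z] := by
  match w, hw with
  | .cons _ (.cons _ .nil), _ => rfl

lemma SimpleGraph.Walk.IsPath.exists_adj_adj_ne {w : h.Walk y z} (hw : w.IsPath)
    (hi : i ∈ w.support) (hy : y ≠ i) (hz : z ≠ i) :
    ∃ u v, h.Adj i u ∧ h.Adj i v ∧ u ≠ v := by
  obtain ⟨n, rfl, hn⟩ := Walk.mem_support_iff_exists_getVert.1 hi
  obtain ⟨m, rfl⟩ : ∃ m, n = m + 1 := Nat.exists_eq_succ_of_ne_zero (by rintro rfl; simp at hy)
  have hlt : m + 1 < w.length := hn.lt_of_ne fun heq => hz (by rw [heq, Walk.getVert_length])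
  refine ⟨w.getVert m, w.getVert (m + 2), (w.adj_getVert_succ (by omega)).symm,
    w.adj_getVert_succ hlt, fun heq => ?_⟩
  have := hw.getVert_injOn (by simp only [Set.mem_ofPred_eq]; omega)
    (by simp only [Set.mem_ofPred_eq]; omega) heq
  omega

def pathSubtypeEquivWalk (P : h.Walk y z → Prop) (hP : ∀ w, P w → w.IsPath) :
    {p : h.Path y z // P p.1} ≃ {w : h.Walk y z // P w} where
  toFun p := ⟨p.1.1, p.2⟩
  invFun w := ⟨⟨w.1, hP _ w.2⟩, w.2⟩
  left_inv _ := rfl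
  right_inv _ := rfl

lemma sigmaAll_eq_card_walk :
    sigmaAll h y z = Nat.card {w : h.Walk y z // w.length = h.dist y z} :=
  Nat.card_congr (pathSubtypeEquivWalk _ fun w hw => w.isPath_of_length_eq_dist hw)

lemma sigmaThr_eq_card_walk :
    sigmaThr h y z i = Nat.card {w : h.Walk y z // w.length = h.dist y z ∧ i ∈ w.support} :=
  Nat.card_congr <| pathSubtypeEquivWalk (fun w => w.length = h.dist y z ∧ i ∈ w.support)
    fun w hw => w.isPath_of_length_eq_dist hw.1

lemma sigmaAll_of_dist_eq_two (hd : h.dist y z = 2) :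
    sigmaAll h y z = (h.commonNeighbors y z).ncard := by
  rw [sigmaAll_eq_card_walk, hd, Nat.card_congr (h.walkLengthTwoEquivCommonNeighbors y z),
    Nat.card_coe_set_eq]

open scoped Classical in
lemma sigmaThr_of_dist_eq_two (hd : h.dist y z = 2) (hy : y ≠ i) (hz : z ≠ i) :
    sigmaThr h y z i = if i ∈ h.commonNeighbors y z then 1 else 0 := by
  rw [sigmaThr_eq_card_walk, hd]
  set e := h.walkLengthTwoEquivCommonNeighbors y z
  have hsnd : ∀ w : {w : h.Walk y z // w.length = 2}, (e w : V) = w.1.snd := fun _ => rfl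
  have hmem : ∀ w : {w : h.Walk y z // w.length = 2}, i ∈ w.1.support ↔ (e w : V) = i := by
    intro w
    rw [hsnd, w.1.support_of_length_eq_two w.2]
    simp [hy.symm, hz.symm, eq_comm]
  split_ifs with hi
  · refine Nat.card_eq_one_iff_exists.2 ⟨⟨(e.symm ⟨i, hi⟩).1, (e.symm ⟨i, hi⟩).2, ?_⟩, ?_⟩
    · rw [hmem ⟨_, _⟩, Subtype.coe_eta, e.apply_symm_apply]
    · rintro ⟨w, hw2, hwi⟩
      have : e ⟨w, hw2⟩ = ⟨i, hi⟩ := Subtype.ext ((hmem ⟨w, hw2⟩).1 hwi)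
      simp [← this]
  · refine @Nat.card_of_isEmpty _ ⟨fun ⟨w, hw2, hwi⟩ => hi ?_⟩
    rw [← (hmem ⟨w, hw2⟩).1 hwi]
    exact (e ⟨w, hw2⟩).2

lemma sigmaThr_of_adj (hadj : h.Adj y z) (hy : y ≠ i) (hz : z ≠ i) : sigmaThr h y z i = 0 := by
  rw [sigmaThr_eq_card_walk, dist_eq_one_iff_adj.2 hadj]
  refine @Nat.card_of_isEmpty _ ⟨fun ⟨w, hw1, hwi⟩ => ?_⟩
  match w, hw1 with
  | .cons _ .nil, _ => simp_all [eq_comm]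

lemma sigmaThr_of_not_reachable (hr : ¬ h.Reachable y z) : sigmaThr h y z i = 0 :=
  @Nat.card_of_isEmpty _ ⟨fun p => hr p.1.1.reachable⟩

lemma sigmaThr_of_subsingleton_neighborSet (hy : y ≠ i) (hz : z ≠ i)
    (hi : (h.neighborSet i).Subsingleton) : sigmaThr h y z i = 0 := by
  refine @Nat.card_of_isEmpty _ ⟨fun p => ?_⟩
  obtain ⟨u, v, hu, hv, huv⟩ := p.1.2.exists_adj_adj_ne p.2.2 hy hz
  exact huv (hi hu hv)

end PathCounts

section Betweenness

open scoped Classical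

variable {V : Type*} {h h' : SimpleGraph V} {y z i j : V}

noncomputable def btwTerm (h : SimpleGraph V) (y z i : V) : ℝ :=
  (sigmaThr h y z i : ℝ) / (sigmaAll h y z : ℝ)

lemma btwTerm_nonneg : 0 ≤ btwTerm h y z i := by
  unfold btwTerm
  positivity

def DistLeTwoAwayFrom (h : SimpleGraph V) (i : V) : Prop :=
  ∀ ⦃y z : V⦄, y ≠ i → z ≠ i → h.Reachable y z → h.dist y z ≤ 2

lemma DistLeTwoAwayFrom.of_adj_or_nonempty (S : Set V)
    (hout : ∀ y ∉ S, y ≠ i → ∀ w, ¬ h.Adj y w)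
    (hnear : ∀ y ∈ S, ∀ z ∈ S, y ≠ i → z ≠ i → y ≠ z →
      h.Adj y z ∨ (h.commonNeighbors y z).Nonempty) :
    DistLeTwoAwayFrom h i := by
  have hmem : ∀ {y z}, h.Reachable y z → y ≠ z → y ≠ i → y ∈ S := by
    rintro y z ⟨p⟩ hyz hy
    by_contra hyS
    cases p with
    | nil => exact hyz rfl
    | cons hadj _ => exact hout y hyS hy _ hadj
  intro y z hy hz hr
  by_cases hyz : y = z
  · simp [hyz]
  rcases hnear y (hmem hr hyz hy) z (hmem hr.symm (Ne.symm hyz) hz) hy hz hyz with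
    hadj | ⟨x, hx⟩
  · exact (dist_eq_one_iff_adj.2 hadj).trans_le one_le_two
  · rw [mem_commonNeighbors] at hx
    exact dist_le (.cons hx.1 (.cons hx.2.symm .nil))

-- At distance two there is exactly one shortest path through each common neighbour.
lemma btwTerm_eq_ite (hyz : y ≠ z) (hy : y ≠ i) (hz : z ≠ i)
    (hd : h.Reachable y z → h.dist y z ≤ 2) :
    btwTerm h y z i = if i ∈ h.neighborSet y ∩ h.neighborSet z ∧ z ∉ h.neighborSet y
      then ((h.neighborSet y ∩ h.neighborSet z).ncard : ℝ)⁻¹ else 0 := by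
  by_cases hr : h.Reachable y z
  · by_cases hadj : h.Adj y z
    · simp [btwTerm, sigmaThr_of_adj hadj hy hz, hadj]
    · have hd2 : h.dist y z = 2 := by
        have := hr.one_lt_dist_of_ne_of_not_adj hyz hadj
        have := hd hr
        omega
      rw [btwTerm, sigmaThr_of_dist_eq_two hd2 hy hz, sigmaAll_of_dist_eq_two hd2]
      split_ifs <;> simp_all [commonNeighbors_eq]
  · rw [btwTerm, sigmaThr_of_not_reachable hr, if_neg]
    · simp
    · rintro ⟨hi, -⟩
      exact hr (hi.1.reachable.trans hi.2.symm.reachable)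

lemma btwTerm_congr (hd : DistLeTwoAwayFrom h i) (hd' : DistLeTwoAwayFrom h' i)
    (hyz : y ≠ z) (hy : y ≠ i) (hz : z ≠ i)
    (hNy : h'.neighborSet y = h.neighborSet y) (hNz : h'.neighborSet z = h.neighborSet z) :
    btwTerm h' y z i = btwTerm h y z i := by
  rw [btwTerm_eq_ite hyz hy hz (hd' hy hz), btwTerm_eq_ite hyz hy hz (hd hy hz)]
  simp only [hNy, hNz]

lemma btwTerm_eq_zero (hd : DistLeTwoAwayFrom h i) (hyz : y ≠ z) (hy : y ≠ i) (hz : z ≠ i)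
    (hi : h.Adj y i → h.Adj z i → h.Adj y z) : btwTerm h y z i = 0 := by
  rw [btwTerm_eq_ite hyz hy hz (hd hy hz), if_neg]
  rintro ⟨⟨hyi, hzi⟩, hnadj⟩
  exact hnadj (hi hyi hzi)

variable [Fintype V]

lemma btw_congr (hterm : ∀ y z, y ≠ z → y ≠ i → z ≠ i → btwTerm h' y z i = btwTerm h y z i) :
    _root_.btw h' i = _root_.btw h i := by
  unfold _root_.btw
  congr 1
  refine Finset.sum_congr rfl fun y _ => Finset.sum_congr rfl fun z _ => ?_
  split_ifs with hc
  · exact hterm y z hc.1 hc.2.1 hc.2.2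
  · rfl

lemma btw_lt_btw (hle : ∀ y z, y ≠ z → y ≠ i → z ≠ i → btwTerm h' y z i ≤ btwTerm h y z i)
    (hyz : y ≠ z) (hy : y ≠ i) (hz : z ≠ i) (hlt : btwTerm h' y z i < btwTerm h y z i) :
    _root_.btw h' i < _root_.btw h i := by
  have hle' : ∀ y z : V, (if y ≠ z ∧ y ≠ i ∧ z ≠ i then btwTerm h' y z i else 0) ≤
      if y ≠ z ∧ y ≠ i ∧ z ≠ i then btwTerm h y z i else 0 := by
    intro y z
    split_ifs with hc
    · exact hle y z hc.1 hc.2.1 hc.2.2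
    · rfl
  refine mul_lt_mul_of_pos_left (Finset.sum_lt_sum (fun y _ => Finset.sum_le_sum
    fun z _ => hle' y z) ⟨y, Finset.mem_univ _, Finset.sum_lt_sum (fun z _ => hle' y z)
      ⟨z, Finset.mem_univ _, ?_⟩⟩) one_half_pos
  rwa [if_pos ⟨hyz, hy, hz⟩, if_pos ⟨hyz, hy, hz⟩]

lemma btw_eq_zero_of_subsingleton_neighborSet (hi : (h.neighborSet i).Subsingleton) :
    _root_.btw h i = 0 := by
  simp +contextual [_root_.btw, sigmaThr_of_subsingleton_neighborSet _ _ hi]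

lemma btw_addE_of_isolated (hij : i ≠ j) (hj : ∀ w, ¬ h.Adj j w) :
    _root_.btw (addE h i j) j = _root_.btw h j := by
  have hN : h.neighborSet j = ∅ := Set.eq_empty_iff_forall_notMem.2 hj
  have hN' : (addE h i j).neighborSet j = {i} := by
    rw [addE_comm, neighborSet_addE_self hij.symm, hN, insert_empty_eq]
  rw [btw_eq_zero_of_subsingleton_neighborSet (hN' ▸ Set.subsingleton_singleton),
    btw_eq_zero_of_subsingleton_neighborSet (hN ▸ Set.subsingleton_empty)]

lemma btw_addE_of_not_adj_of_neighborSet_subset (hnadj : ¬ h.Adj i j)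
    (hsub : h.neighborSet i ⊆ h.neighborSet j)
    (hd : DistLeTwoAwayFrom h i) (hd' : DistLeTwoAwayFrom (addE h i j) i) :
    _root_.btw (addE h i j) i = _root_.btw h i := by
  have hadj' : ∀ {u}, u ≠ i → u ≠ j → (addE h i j).Adj u i → (addE h i j).Adj u j := by
    intro u hui huj hu
    rw [← mem_neighborSet, neighborSet_addE_of_ne hui huj, mem_neighborSet] at hu ⊢
    exact (hsub hu.symm).symm
  refine btw_congr fun y z hyz hy hz => ?_
  by_cases hyj : y = j
  · subst hyj
    rw [btwTerm_eq_zero hd' hyz hy hz fun _ hzi => (hadj' hz (Ne.symm hyz) hzi).symm,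
      btwTerm_eq_zero hd hyz hy hz fun hyi => absurd hyi.symm hnadj]
  by_cases hzj : z = j
  · subst hzj
    rw [btwTerm_eq_zero hd' hyz hy hz fun hyi _ => hadj' hy hyz hyi,
      btwTerm_eq_zero hd hyz hy hz fun _ hzi => absurd hzi.symm hnadj]
  exact btwTerm_congr hd hd' hyz hy hz (neighborSet_addE_of_ne hy hyj)
    (neighborSet_addE_of_ne hz hzj)

lemma btw_delE_lt_of_not_adj {z₀ : V} (hadj : h.Adj i j) (hz₀ : h.Adj i z₀) (hjz₀ : j ≠ z₀)
    (hnadj : ¬ h.Adj j z₀) (hd : DistLeTwoAwayFrom h i) (hd' : DistLeTwoAwayFrom (delE h i j) i) :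
    _root_.btw (delE h i j) i < _root_.btw h i := by
  have hji : ¬ (delE h i j).Adj j i := by simp [delE_adj]
  refine btw_lt_btw (fun y z hyz hy hz => ?_) hjz₀ hadj.ne.symm hz₀.ne.symm ?_
  · by_cases hyj : y = j
    · subst hyj
      exact (btwTerm_eq_zero hd' hyz hy hz fun h => absurd h hji).trans_le btwTerm_nonneg
    by_cases hzj : z = j
    · subst hzj
      exact (btwTerm_eq_zero hd' hyz hy hz fun _ h => absurd h hji).trans_le btwTerm_nonneg
    exact (btwTerm_congr hd hd' hyz hy hz (neighborSet_delE_of_ne hy hyj)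
      (neighborSet_delE_of_ne hz hzj)).le
  · have hcommon : i ∈ h.neighborSet j ∩ h.neighborSet z₀ := ⟨hadj.symm, hz₀.symm⟩
    rw [btwTerm_eq_zero hd' hjz₀ hadj.ne.symm hz₀.ne.symm fun h => absurd h hji,
      btwTerm_eq_ite hjz₀ hadj.ne.symm hz₀.ne.symm (hd hadj.ne.symm hz₀.ne.symm),
      if_pos ⟨hcommon, hnadj⟩]
    exact inv_pos.2 (Nat.cast_pos.2 ((Set.ncard_pos (Set.toFinite _)).2 ⟨i, hcommon⟩))

end Betweenness

def IsCompleteBipartiteOn {V : Type*} (g : SimpleGraph V) (A B : Set V) : Prop :=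
  ∀ u v, g.Adj u v ↔ u ∈ A ∧ v ∈ B ∨ u ∈ B ∧ v ∈ A

namespace IsCompleteBipartiteOn

variable {V : Type*} {g : SimpleGraph V} {A B : Set V} {i j u v : V}

lemma symm (hg : IsCompleteBipartiteOn g A B) : IsCompleteBipartiteOn g B A :=
  fun u v => (hg u v).trans or_comm

lemma adj (hg : IsCompleteBipartiteOn g A B) (hu : u ∈ A) (hv : v ∈ B) : g.Adj u v :=
  (hg u v).2 (.inl ⟨hu, hv⟩)

lemma not_adj_of_mem (hg : IsCompleteBipartiteOn g A B) (hAB : Disjoint A B) (hu : u ∈ A)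
    (hv : v ∈ A) : ¬ g.Adj u v := by
  rw [hg]
  rintro (⟨-, hvB⟩ | ⟨huB, -⟩)
  · exact Set.disjoint_left.1 hAB hv hvB
  · exact Set.disjoint_left.1 hAB hu huB

lemma not_adj_of_notMem (hg : IsCompleteBipartiteOn g A B) (hu : u ∉ A ∪ B) : ¬ g.Adj u v := by
  rw [Set.mem_union] at hu
  rw [hg]
  tauto

lemma neighborSet_eq (hg : IsCompleteBipartiteOn g A B) (hAB : Disjoint A B) (hu : u ∈ A) :
    g.neighborSet u = B := by
  ext v
  simp [hg u v, hu, Set.disjoint_left.1 hAB hu]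

lemma adj_or_commonNeighbors_nonempty (hg : IsCompleteBipartiteOn g A B) (hA : A.Nonempty)
    (hB : B.Nonempty) (hu : u ∈ A ∪ B) (hv : v ∈ A ∪ B) :
    g.Adj u v ∨ (g.commonNeighbors u v).Nonempty := by
  obtain ⟨a, ha⟩ := hA
  obtain ⟨b, hb⟩ := hB
  rcases hu with hu | hu <;> rcases hv with hv | hv
  · exact .inr ⟨b, hg.adj hu hb, hg.adj hv hb⟩
  · exact .inl (hg.adj hu hv)
  · exact .inl (hg.symm.adj hu hv)
  · exact .inr ⟨a, hg.symm.adj hu ha, hg.symm.adj hv ha⟩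

lemma distLeTwoAwayFrom (hg : IsCompleteBipartiteOn g A B) (hA : A.Nonempty)
    (hB : B.Nonempty) : DistLeTwoAwayFrom g i :=
  .of_adj_or_nonempty (A ∪ B) (fun _ hy _ _ => hg.not_adj_of_notMem hy)
    fun _ hy _ hz _ _ _ => hg.adj_or_commonNeighbors_nonempty hA hB hy hz

lemma distLeTwoAwayFrom_addE (hg : IsCompleteBipartiteOn g A B) (hB : B.Nonempty)
    (hi : i ∈ A) (hj : j ∈ A) : DistLeTwoAwayFrom (addE g i j) i := by
  refine .of_adj_or_nonempty (A ∪ B) (fun y hy _ w hyw => ?_) fun y hy z hz _ _ _ => ?_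
  · rcases addE_adj.1 hyw with hyw | ⟨-, ⟨rfl, -⟩ | ⟨rfl, -⟩⟩
    · exact hg.not_adj_of_notMem hy hyw
    · exact hy (.inl hi)
    · exact hy (.inl hj)
  · rcases hg.adj_or_commonNeighbors_nonempty ⟨i, hi⟩ hB hy hz with hyz | ⟨x, hyx, hzx⟩
    · exact .inl (le_addE hyz)
    · exact .inr ⟨x, le_addE hyx, le_addE hzx⟩

lemma distLeTwoAwayFrom_delE (hg : IsCompleteBipartiteOn g A B) (hAB : Disjoint A B)
    (hA : A.Nontrivial) (hi : i ∈ A) (hj : j ∈ B) : DistLeTwoAwayFrom (delE g i j) i := by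
  have hdel : ∀ {u v}, u ≠ i → v ≠ i → g.Adj u v → (delE g i j).Adj u v := by
    intro u v hu hv huv
    simp [delE_adj, huv, hu, hv]
  have hji : j ≠ i := fun h => Set.disjoint_left.1 hAB hi (h ▸ hj)
  obtain ⟨i', hi', hi'i⟩ := hA.exists_ne i
  refine .of_adj_or_nonempty (A ∪ B) (fun y hy _ w hyw => hg.not_adj_of_notMem hy (delE_le hyw))
    fun y hy z hz hyi hzi _ => ?_
  rcases hy with hy | hy <;> rcases hz with hz | hz
  · exact .inr ⟨j, hdel hyi hji (hg.adj hy hj), hdel hzi hji (hg.adj hz hj)⟩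
  · exact .inl (hdel hyi hzi (hg.adj hy hz))
  · exact .inl (hdel hyi hzi (hg.symm.adj hy hz))
  · exact .inr ⟨i', hdel hyi hi'i (hg.symm.adj hy hi'), hdel hzi hi'i (hg.symm.adj hz hi')⟩

lemma exists_reachable_not_adj (hg : IsCompleteBipartiteOn g A B) (hAB : Disjoint A B)
    (hA : A.Nontrivial) (hB : B.Nonempty) : ∃ u v, u ≠ v ∧ g.Reachable u v ∧ ¬ g.Adj u v := by
  obtain ⟨u, hu, v, hv, huv⟩ := hA
  obtain ⟨b, hb⟩ := hB
  exact ⟨u, v, huv, (hg.adj hu hb).reachable.trans (hg.adj hv hb).reachable.symm,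
    hg.not_adj_of_mem hAB hu hv⟩

variable [Fintype V]

lemma btw_addE_eq (hg : IsCompleteBipartiteOn g A B) (hAB : Disjoint A B) (hB : B.Nonempty)
    (hi : i ∈ A) (hj : j ∈ A) : _root_.btw (addE g i j) i = _root_.btw g i :=
  btw_addE_of_not_adj_of_neighborSet_subset (hg.not_adj_of_mem hAB hi hj)
    (by rw [hg.neighborSet_eq hAB hi, hg.neighborSet_eq hAB hj])
    (hg.distLeTwoAwayFrom ⟨i, hi⟩ hB) (hg.distLeTwoAwayFrom_addE hB hi hj)

lemma btw_addE_le_or (hg : IsCompleteBipartiteOn g A B) (hAB : Disjoint A B)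
    (hA : A.Nonempty) (hB : B.Nonempty) (hij : i ≠ j) (hnadj : ¬ g.Adj i j) :
    _root_.btw (addE g i j) i ≤ _root_.btw g i ∨ _root_.btw (addE g i j) j ≤ _root_.btw g j := by
  by_cases hi : i ∈ A ∪ B
  · by_cases hj : j ∈ A ∪ B
    · left
      rcases hi with hi | hi <;> rcases hj with hj | hj
      · exact (hg.btw_addE_eq hAB hB hi hj).le
      · exact absurd (hg.adj hi hj) hnadj
      · exact absurd (hg.symm.adj hi hj) hnadj
      · exact (hg.symm.btw_addE_eq hAB.symm hA hi hj).le
    · exact .inr (btw_addE_of_isolated hij fun _ => hg.not_adj_of_notMem hj).le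
  · left
    rw [addE_comm]
    exact (btw_addE_of_isolated hij.symm fun _ => hg.not_adj_of_notMem hi).le

lemma btw_delE_lt_of_mem (hg : IsCompleteBipartiteOn g A B) (hAB : Disjoint A B)
    (hA : A.Nontrivial) (hB : B.Nontrivial) (hi : i ∈ A) (hj : j ∈ B) :
    _root_.btw (delE g i j) i < _root_.btw g i := by
  obtain ⟨z, hz, hzj⟩ := hB.exists_ne j
  exact btw_delE_lt_of_not_adj (hg.adj hi hj) (hg.adj hi hz) hzj.symm
    (hg.symm.not_adj_of_mem hAB.symm hj hz) (hg.distLeTwoAwayFrom hA.nonempty hB.nonempty)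
    (hg.distLeTwoAwayFrom_delE hAB hA hi hj)

lemma btw_delE_lt (hg : IsCompleteBipartiteOn g A B) (hAB : Disjoint A B)
    (hA : A.Nontrivial) (hB : B.Nontrivial) (hadj : g.Adj i j) :
    _root_.btw (delE g i j) i < _root_.btw g i := by
  rcases (hg i j).1 hadj with ⟨hi, hj⟩ | ⟨hi, hj⟩
  · exact hg.btw_delE_lt_of_mem hAB hA hB hi hj
  · exact hg.symm.btw_delE_lt_of_mem hAB.symm hB hA hi hj

end IsCompleteBipartiteOn

theorem statement_10_general {V : Type*} [Fintype V] (a b : ℕ)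
    (ha : 2 ≤ a) (hb : 2 ≤ b) (A B : Finset V) (hA : A.card = a) (hB : B.card = b)
    (hAB : Disjoint A B) (g : SimpleGraph V)
    -- g is the complete bipartite graph on A ∪ B, all other vertices isolated
    (hg : ∀ u v : V, g.Adj u v ↔ ((u ∈ A ∧ v ∈ B) ∨ (u ∈ B ∧ v ∈ A))) :
    APSN (fun v h => btw h v) g ∧
      -- in particular, the nontrivial component of g is not a complete graph
      ∃ u v : V, u ≠ v ∧ g.Reachable u v ∧ ¬ g.Adj u v := by
  have hK : IsCompleteBipartiteOn g A B := hg
  have hAB' : Disjoint (A : Set V) B := Finset.disjoint_coe.2 hAB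
  have hA' : (A : Set V).Nontrivial := Finset.one_lt_card_iff_nontrivial.1 (by omega)
  have hB' : (B : Set V).Nontrivial := Finset.one_lt_card_iff_nontrivial.1 (by omega)
  refine ⟨apsn_of_forall ?_ fun _ _ hadj => hK.btw_delE_lt hAB' hA' hB' hadj,
    hK.exists_reachable_not_adj hAB' hA' hB'.nonempty⟩
  exact fun _ _ hij hnadj => hK.btw_addE_le_or hAB' hA'.nonempty hB'.nonempty hij hnadj

theorem statement_10 {V : Type*} [Fintype V] [DecidableEq V] (a b : ℕ)
    (ha : 2 ≤ a) (hb : 2 ≤ b) (A B : Finset V) (hA : A.card = a) (hB : B.card = b)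
    (hAB : Disjoint A B) (g : SimpleGraph V)
    -- g is the complete bipartite graph on A ∪ B, all other vertices isolated
    (hg : ∀ u v : V, g.Adj u v ↔ ((u ∈ A ∧ v ∈ B) ∨ (u ∈ B ∧ v ∈ A))) :
    APSN (fun v h => btw h v) g ∧
      -- in particular, the nontrivial component of g is not a complete graph
      ∃ u v : V, u ≠ v ∧ g.Reachable u v ∧ ¬ g.Adj u v :=
  statement_10_general a b ha hb A B hA hB hAB g hg
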